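/- Let â₁, â₂, â₃ be unit vectors in a 2-dimensional real inner product space such that for all i ≠ j, 0 < |⟨â_i, â_j⟩| < 1. Define, for each cyclic assignment i ≠ j ≠ k, A_i = √( ⟨â_j,â_k⟩ / (⟨â_j,â_k⟩ − ⟨â_i,â_j⟩⟨â_i,â_k⟩) ) and B_i = A_i √( −⟨â_i,â_j⟩⟨â_i,â_k⟩ / ⟨â_j,â_k⟩ ), assuming the quantities under the square roots are nonnegative and denominators nonzero. Then the vectors ē_i = A_i â_i + B_i n̂ (n̂ a unit vector orthogonal to the plane) satisfy ⟨ē_i, ē_i⟩ = A_i² + B_i² = 1 and, with appropriate consistent sign choices of B_i, ⟨ē_i, ē_j⟩ = A_i A_j ⟨â_i, â_j⟩ + B_i B_j = 0 for i ≠ j. -/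

import Mathlib

open RealInnerProductSpace

private lemma triad_aux1 (x p : ℝ) (hx : x ≠ 0) (hd : x - p ≠ 0) :
    x / (x - p) + x / (x - p) * (-p / x) = 1 := by
  field_simp
  ring

private lemma triad_aux2 (q u v : ℝ) (hu : u ≠ 0) (hv : v ≠ 0) :
    (-(q * u) / v) * (-(q * v) / u) = q ^ 2 := by
  field_simp

private lemma triad_aux3 (p x : ℝ) (hx : x ≠ 0) : p * x = (p / x) * x ^ 2 := by
  field_simp

/-- Reconstruction of an orthonormal triad from normalized tangential projections:
with `A_i`, `B_i` given by the stated square-root formulas (assumed well defined),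
the vectors `ē_i = A_i â_i + B_i n̂` are unit, and with appropriate consistent sign
choices of the `B_i` they are mutually orthogonal. -/
theorem triad_reconstruction
    (a : Fin 3 → EuclideanSpace ℝ (Fin 3)) (n : EuclideanSpace ℝ (Fin 3))
    (han : ∀ i, ‖a i‖ = 1) (hn : ‖n‖ = 1) (horth : ∀ i, ⟪a i, n⟫ = 0)
    (hc : ∀ i j, i ≠ j → 0 < |⟪a i, a j⟫| ∧ |⟪a i, a j⟫| < 1)
    (A B : Fin 3 → ℝ)
    (hA : ∀ i j k, i ≠ j → j ≠ k → i ≠ k →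
      A i = Real.sqrt (⟪a j, a k⟫ / (⟪a j, a k⟫ - ⟪a i, a j⟫ * ⟪a i, a k⟫)))
    (hB : ∀ i j k, i ≠ j → j ≠ k → i ≠ k →
      B i = A i * Real.sqrt (-(⟪a i, a j⟫ * ⟪a i, a k⟫) / ⟪a j, a k⟫))
    (hwd : ∀ i j k, i ≠ j → j ≠ k → i ≠ k →
      0 ≤ ⟪a j, a k⟫ / (⟪a j, a k⟫ - ⟪a i, a j⟫ * ⟪a i, a k⟫) ∧
      0 ≤ -(⟪a i, a j⟫ * ⟪a i, a k⟫) / ⟪a j, a k⟫ ∧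
      ⟪a j, a k⟫ - ⟪a i, a j⟫ * ⟪a i, a k⟫ ≠ 0) :
    (∀ i, ⟪A i • a i + B i • n, A i • a i + B i • n⟫ = A i ^ 2 + B i ^ 2 ∧
      A i ^ 2 + B i ^ 2 = 1) ∧
    ∃ ε : Fin 3 → ℝ, (∀ i, ε i = 1 ∨ ε i = -1) ∧
      ∀ i j, i ≠ j →
        ⟪A i • a i + (ε i * B i) • n, A j • a j + (ε j * B j) • n⟫
            = A i * A j * ⟪a i, a j⟫ + (ε i * B i) * (ε j * B j) ∧
        A i * A j * ⟪a i, a j⟫ + (ε i * B i) * (ε j * B j) = 0 := by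
  have hc' : ∀ i j, i ≠ j → ⟪a i, a j⟫ ≠ 0 := by
    intro i j h h0
    have := (hc i j h).1
    rw [h0] at this; simp at this
  have hexp : ∀ (i j : Fin 3) (u v u' v' : ℝ),
      ⟪u • a i + v • n, u' • a j + v' • n⟫ = u * u' * ⟪a i, a j⟫ + v * v' := by
    intro i j u v u' v'
    have hni : ∀ j, ⟪n, a j⟫ = 0 := fun j => by rw [real_inner_comm]; exact horth j
    have hnn : ⟪n, n⟫ = 1 := by rw [real_inner_self_eq_norm_sq, hn]; norm_num
    rw [inner_add_left, inner_add_right, inner_add_right, real_inner_smul_left,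
      real_inner_smul_left, real_inner_smul_left, real_inner_smul_left,
      real_inner_smul_right, real_inner_smul_right, real_inner_smul_right,
      real_inner_smul_right, horth, hni, hnn]
    ring
  have haa : ∀ i, ⟪a i, a i⟫ = 1 := fun i => by
    rw [real_inner_self_eq_norm_sq, han]; norm_num
  -- unit norms
  have hunit : ∀ i j k, i ≠ j → j ≠ k → i ≠ k → A i ^ 2 + B i ^ 2 = 1 := by
    intro i j k h1 h2 h3
    obtain ⟨w1, w2, w3⟩ := hwd i j k h1 h2 h3
    have hx := hc' j k h2
    rw [hB i j k h1 h2 h3, hA i j k h1 h2 h3, mul_pow, Real.sq_sqrt w1, Real.sq_sqrt w2]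
    exact triad_aux1 _ _ hx w3
  have hunit' : ∀ i : Fin 3, A i ^ 2 + B i ^ 2 = 1 := by
    intro i
    fin_cases i
    · exact hunit 0 1 2 (by decide) (by decide) (by decide)
    · exact hunit 1 0 2 (by decide) (by decide) (by decide)
    · exact hunit 2 0 1 (by decide) (by decide) (by decide)
  -- product of B's
  have hBB : ∀ i j k : Fin 3, i ≠ j → j ≠ k → i ≠ k →
      B i * B j = A i * A j * |⟪a i, a j⟫| := by
    intro i j k h1 h2 h3
    have hik := hc' i k h3
    have hjk := hc' j k h2
    have wi := (hwd i j k h1 h2 h3).2.1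
    rw [hB i j k h1 h2 h3, hB j i k (Ne.symm h1) h3 h2]
    have hkey : Real.sqrt (-(⟪a i, a j⟫ * ⟪a i, a k⟫) / ⟪a j, a k⟫) *
        Real.sqrt (-(⟪a j, a i⟫ * ⟪a j, a k⟫) / ⟪a i, a k⟫) = |⟪a i, a j⟫| := by
      rw [← Real.sqrt_mul wi, ← Real.sqrt_sq_eq_abs]
      congr 1
      rw [real_inner_comm (a j) (a i)]
      exact triad_aux2 _ _ _ hik hjk
    calc A i * Real.sqrt (-(⟪a i, a j⟫ * ⟪a i, a k⟫) / ⟪a j, a k⟫) *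
          (A j * Real.sqrt (-(⟪a j, a i⟫ * ⟪a j, a k⟫) / ⟪a i, a k⟫))
        = A i * A j * (Real.sqrt (-(⟪a i, a j⟫ * ⟪a i, a k⟫) / ⟪a j, a k⟫) *
          Real.sqrt (-(⟪a j, a i⟫ * ⟪a j, a k⟫) / ⟪a i, a k⟫)) := by ring
      _ = A i * A j * |⟪a i, a j⟫| := by rw [hkey]
  -- product of the three cosines is negative
  have h01 := hc' 0 1 (by decide)
  have h02 := hc' 0 2 (by decide)
  have h12 := hc' 1 2 (by decide)
  have hP : ⟪a 0, a 1⟫ * ⟪a 0, a 2⟫ * ⟪a 1, a 2⟫ < 0 := by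
    have w := (hwd 0 1 2 (by decide) (by decide) (by decide)).2.1
    have hle : ⟪a 0, a 1⟫ * ⟪a 0, a 2⟫ / ⟪a 1, a 2⟫ ≤ 0 := by
      rw [neg_div] at w; linarith
    have hle2 : ⟪a 0, a 1⟫ * ⟪a 0, a 2⟫ * ⟪a 1, a 2⟫ ≤ 0 := by
      rw [triad_aux3 _ _ h12]
      exact mul_nonpos_of_nonpos_of_nonneg hle (sq_nonneg _)
    exact lt_of_le_of_ne hle2 (mul_ne_zero (mul_ne_zero h01 h02) h12)
  set e1 : ℝ := if 0 < ⟪a 0, a 1⟫ then -1 else 1 with he1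
  set e2 : ℝ := if 0 < ⟪a 0, a 2⟫ then -1 else 1 with he2
  set ε : Fin 3 → ℝ := ![1, e1, e2] with hε
  have hε0 : ε 0 = 1 := rfl
  have hε1 : ε 1 = e1 := rfl
  have hε2 : ε 2 = e2 := rfl
  have s01 : ε 0 * ε 1 * |⟪a 0, a 1⟫| = -⟪a 0, a 1⟫ := by
    rw [hε0, hε1, he1]
    rcases lt_or_gt_of_ne h01 with h | h
    · rw [if_neg (not_lt.mpr h.le), abs_of_neg h]; ring
    · rw [if_pos h, abs_of_pos h]; ring
  have s02 : ε 0 * ε 2 * |⟪a 0, a 2⟫| = -⟪a 0, a 2⟫ := by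
    rw [hε0, hε2, he2]
    rcases lt_or_gt_of_ne h02 with h | h
    · rw [if_neg (not_lt.mpr h.le), abs_of_neg h]; ring
    · rw [if_pos h, abs_of_pos h]; ring
  have s12 : ε 1 * ε 2 * |⟪a 1, a 2⟫| = -⟪a 1, a 2⟫ := by
    rw [hε1, hε2, he1, he2]
    rcases lt_or_gt_of_ne h01 with h1 | h1 <;> rcases lt_or_gt_of_ne h02 with h2 | h2
    · have h3 : ⟪a 1, a 2⟫ < 0 := by nlinarith [mul_pos_of_neg_of_neg h1 h2, hP]
      rw [if_neg (not_lt.mpr h1.le), if_neg (not_lt.mpr h2.le), abs_of_neg h3]; ring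
    · have h3 : 0 < ⟪a 1, a 2⟫ := by nlinarith [mul_neg_of_neg_of_pos h1 h2, hP]
      rw [if_neg (not_lt.mpr h1.le), if_pos h2, abs_of_pos h3]; ring
    · have h3 : 0 < ⟪a 1, a 2⟫ := by nlinarith [mul_neg_of_pos_of_neg h1 h2, hP]
      rw [if_pos h1, if_neg (not_lt.mpr h2.le), abs_of_pos h3]; ring
    · have h3 : ⟪a 1, a 2⟫ < 0 := by nlinarith [mul_pos h1 h2, hP]
      rw [if_pos h1, if_pos h2, abs_of_neg h3]; ring
  have hsign : ∀ i j : Fin 3, i ≠ j → ε i * ε j * |⟪a i, a j⟫| = -⟪a i, a j⟫ := by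
    have s10 : ε 1 * ε 0 * |⟪a 1, a 0⟫| = -⟪a 1, a 0⟫ := by
      rw [real_inner_comm (a 0) (a 1)]; linear_combination s01
    have s20 : ε 2 * ε 0 * |⟪a 2, a 0⟫| = -⟪a 2, a 0⟫ := by
      rw [real_inner_comm (a 0) (a 2)]; linear_combination s02
    have s21 : ε 2 * ε 1 * |⟪a 2, a 1⟫| = -⟪a 2, a 1⟫ := by
      rw [real_inner_comm (a 1) (a 2)]; linear_combination s12
    intro i j hij
    fin_cases i <;> fin_cases j <;>
      first
        | exact absurd rfl hij
        | exact s01 | exact s02 | exact s10 | exact s12 | exact s20 | exact s21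
  have hεpm : ∀ i, ε i = 1 ∨ ε i = -1 := by
    intro i
    fin_cases i
    · exact Or.inl rfl
    · show e1 = 1 ∨ e1 = -1
      rw [he1]; split_ifs <;> simp
    · show e2 = 1 ∨ e2 = -1
      rw [he2]; split_ifs <;> simp
  have hthird : ∀ i j : Fin 3, i ≠ j → ∃ k, j ≠ k ∧ i ≠ k := by decide
  refine ⟨fun i => ⟨by rw [hexp, haa]; ring, hunit' i⟩, ε, hεpm, ?_⟩
  intro i j hij
  refine ⟨hexp i j (A i) (ε i * B i) (A j) (ε j * B j), ?_⟩
  obtain ⟨k, h2, h3⟩ := hthird i j hij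
  linear_combination (ε i * ε j) * hBB i j k hij h2 h3 + (A i * A j) * hsign i j hij
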